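/- Let μ be a probability measure on a measurable space Ω and let A, B, C be pairwise disjoint measurable sets with A ∪ B ∪ C = Ω and μ(A) > 0. Let T be a measurable set with μ(T) > 0 and μ[T | A] > 0, and let ε be real. Assume μ(T ∩ B) ≥ exp(−2ε)·μ[T | A]·μ(B) and μ(T ∩ C) ≥ exp(−ε)·μ[T | A]·μ(C). Then μ[A | T] / μ(A) ≤ 1 / (μ(A) + exp(−2ε)·μ(B) + exp(−ε)·μ(C)). -/

import Mathlib

/-!
Bayes' rule turns the left-hand side into μ[T | A] / μ(T). Splitting T along the disjoint sets
A, B, C and applying the two hypotheses to the pieces in B and C gives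
μ(T) ≥ μ[T | A] · (μ(A) + e^{-2ε} μ(B) + e^{-ε} μ(C)).
-/

open MeasureTheory

/-- Conditional probability `μ[A | B] = μ(A ∩ B) / μ(B)` as a real number. -/
noncomputable def condP {Ω : Type*} [MeasurableSpace Ω] (μ : Measure Ω) (A B : Set Ω) : ℝ :=
  (μ (A ∩ B)).toReal / (μ B).toReal

open Set

section

variable {Ω : Type*} [MeasurableSpace Ω] {μ : Measure Ω} {A B C T : Set Ω}

theorem measureReal_inter_add_inter_le [IsFiniteMeasure μ] (s : Set Ω) (hB : MeasurableSet B)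
    (hAB : Disjoint A B) : μ.real (s ∩ A) + μ.real (s ∩ B) ≤ μ.real s := by
  have hsub : s ∩ A ⊆ s \ B := fun x hx => ⟨hx.1, hAB.notMem_of_mem_left hx.2⟩
  calc μ.real (s ∩ A) + μ.real (s ∩ B) ≤ μ.real (s \ B) + μ.real (s ∩ B) :=
        add_le_add_left (measureReal_mono (μ := μ) hsub) _
    _ = μ.real s := by rw [add_comm, measureReal_inter_add_sdiff hB]

theorem measureReal_inter_add_inter_add_inter_le [IsFiniteMeasure μ] (s : Set Ω)
    (hB : MeasurableSet B) (hC : MeasurableSet C)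
    (hAB : Disjoint A B) (hAC : Disjoint A C) (hBC : Disjoint B C) :
    μ.real (s ∩ A) + μ.real (s ∩ B) + μ.real (s ∩ C) ≤ μ.real s :=
  calc μ.real (s ∩ A) + μ.real (s ∩ B) + μ.real (s ∩ C)
      ≤ μ.real (s ∩ (A ∪ B)) + μ.real (s ∩ C) := by
        gcongr
        simpa only [inter_assoc, union_inter_cancel_left, union_inter_cancel_right] using
          measureReal_inter_add_inter_le (μ := μ) (s ∩ (A ∪ B)) hB hAB
    _ ≤ μ.real s := measureReal_inter_add_inter_le s hC (disjoint_union_left.2 ⟨hAC, hBC⟩)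

theorem condP_mul_measure (hA : 0 < (μ A).toReal) :
    condP μ T A * (μ A).toReal = (μ (T ∩ A)).toReal :=
  div_mul_cancel₀ _ hA.ne'

theorem condP_div_comm : condP μ A T / (μ A).toReal = condP μ T A / (μ T).toReal := by
  rw [condP, condP, inter_comm, div_div, div_div, mul_comm]

theorem condP_mul_weighted_sum_le [IsFiniteMeasure μ] (hA : 0 < (μ A).toReal)
    (hB : MeasurableSet B) (hC : MeasurableSet C)
    (hAB : Disjoint A B) (hAC : Disjoint A C) (hBC : Disjoint B C) {x y : ℝ}
    (hxB : x * condP μ T A * (μ B).toReal ≤ (μ (T ∩ B)).toReal)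
    (hyC : y * condP μ T A * (μ C).toReal ≤ (μ (T ∩ C)).toReal) :
    condP μ T A * ((μ A).toReal + x * (μ B).toReal + y * (μ C).toReal) ≤ (μ T).toReal :=
  calc condP μ T A * ((μ A).toReal + x * (μ B).toReal + y * (μ C).toReal)
      = condP μ T A * (μ A).toReal + x * condP μ T A * (μ B).toReal
          + y * condP μ T A * (μ C).toReal := by ring
    _ ≤ (μ (T ∩ A)).toReal + (μ (T ∩ B)).toReal + (μ (T ∩ C)).toReal := by
        rw [condP_mul_measure hA]; gcongr
    _ ≤ (μ T).toReal := measureReal_inter_add_inter_add_inter_le T hB hC hAB hAC hBC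

end

theorem stmt_3 {Ω : Type*} [MeasurableSpace Ω] (μ : Measure Ω) [IsProbabilityMeasure μ]
    (A B C T : Set Ω)
    (hB : MeasurableSet B) (hC : MeasurableSet C)
    (hAB : Disjoint A B) (hAC : Disjoint A C) (hBC : Disjoint B C)
    (hA0 : 0 < (μ A).toReal) (hT0 : 0 < (μ T).toReal)
    (ε : ℝ)
    (h1 : Real.exp (-(2*ε)) * condP μ T A * (μ B).toReal ≤ (μ (T ∩ B)).toReal)
    (h2 : Real.exp (-ε) * condP μ T A * (μ C).toReal ≤ (μ (T ∩ C)).toReal) :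
    condP μ A T / (μ A).toReal ≤
      1 / ((μ A).toReal + Real.exp (-(2*ε)) * (μ B).toReal + Real.exp (-ε) * (μ C).toReal) := by
  rw [condP_div_comm, div_le_div_iff₀ hT0 (by positivity), one_mul]
  exact condP_mul_weighted_sum_le hA0 hB hC hAB hAC hBC h1 h2
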